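/- Let G be a König–Egerváry graph. Then prk(G) = 2μ(G), where prk(G) denotes the maximum order of a subgraph of G each of whose connected components is either a single edge or a cycle, and μ(G) is the matching number of G. -/

import Mathlib

/-! ## Basic matching terminology -/

/-- `M` is a matching of the simple graph `G`: a set of edges of `G` that are pairwise
non-adjacent, i.e. no two distinct edges of `M` share a vertex. -/
def IsMatching {V : Type} (G : SimpleGraph V) (M : Finset (Sym2 V)) : Prop :=
  (∀ e ∈ M, e ∈ G.edgeSet) ∧
  ∀ e ∈ M, ∀ f ∈ M, e ≠ f → ∀ v : V, ¬(v ∈ e ∧ v ∈ f)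

/-- A vertex `v` is saturated by the edge set `M` if it is an endpoint of some edge of `M`. -/
def Saturates {V : Type} (M : Finset (Sym2 V)) (v : V) : Prop := ∃ e ∈ M, v ∈ e

/-- `M` is a perfect matching of `G`: a matching saturating every vertex of `G`. -/
def IsPerfectMatching {V : Type} (G : SimpleGraph V) (M : Finset (Sym2 V)) : Prop :=
  IsMatching G M ∧ ∀ v : V, Saturates M v

/-- The matching number `μ(G)`: the maximum cardinality of a matching of `G`. -/
noncomputable def matchNum {V : Type} (G : SimpleGraph V) : ℕ :=
  sSup {n | ∃ M : Finset (Sym2 V), IsMatching G M ∧ M.card = n}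

/-- The independence number `α(G)`: the maximum cardinality of a set of pairwise
non-adjacent vertices. -/
noncomputable def indepNum {V : Type} (G : SimpleGraph V) : ℕ :=
  sSup {n | ∃ S : Finset V, (∀ u ∈ S, ∀ v ∈ S, ¬ G.Adj u v) ∧ S.card = n}

/-- `G` is a König–Egerváry graph if `α(G) + μ(G) = |V(G)|`. -/
def IsKonigEgervary {V : Type} [Fintype V] (G : SimpleGraph V) : Prop :=
  indepNum G + matchNum G = Fintype.card V

/-! ## Degrees and graphs whose components are single edges or cycles -/

/-- The degree of `v` in `H`, as the cardinality of its neighbour set. -/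
noncomputable def ndeg {V : Type} (H : SimpleGraph V) (v : V) : ℕ := (H.neighborSet v).ncard

/-- Every connected component of (the finite simple graph) `H` is a single edge (a copy of
`K₂`) or a cycle: every vertex has degree `1` or `2`, and the degree is constant on each
connected component (a finite connected `1`-regular graph is `K₂`, and a finite connected
`2`-regular graph is a cycle). -/
def ComponentsAreEdgesOrCycles {V : Type} (H : SimpleGraph V) : Prop :=
  (∀ v : V, ndeg H v = 1 ∨ ndeg H v = 2) ∧
  ∀ ⦃u v : V⦄, H.Adj u v → ndeg H u = ndeg H v

/-- `H` is a Sachs subgraph of `G`: a spanning subgraph each of whose connected components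
is a single edge or a cycle. -/
def IsSachsSubgraph {V : Type} (G H : SimpleGraph V) : Prop :=
  H ≤ G ∧ ComponentsAreEdgesOrCycles H

/-- `H` has a connected component which is an odd cycle: a component all of whose vertices
have degree `2` (hence a cycle) with an odd number of vertices. -/
def HasOddCycleComponent {V : Type} (H : SimpleGraph V) : Prop :=
  ∃ c : H.ConnectedComponent, (∀ v ∈ c.supp, ndeg H v = 2) ∧ Odd c.supp.ncard

/-- Degree of a vertex in a subgraph. -/
noncomputable def subNdeg {V : Type} {G : SimpleGraph V} (H : G.Subgraph) (v : V) : ℕ :=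
  (H.neighborSet v).ncard

/-- Every connected component of the subgraph `H` of `G` is a single edge or a cycle. -/
def SubComponentsAreEdgesOrCycles {V : Type} {G : SimpleGraph V} (H : G.Subgraph) : Prop :=
  (∀ v ∈ H.verts, subNdeg H v = 1 ∨ subNdeg H v = 2) ∧
  ∀ ⦃u v : V⦄, H.Adj u v → subNdeg H u = subNdeg H v

/-- The subgraph `H` of `G` has a connected component which is an odd cycle. -/
def SubHasOddCycleComponent {V : Type} {G : SimpleGraph V} (H : G.Subgraph) : Prop :=
  ∃ c : H.coe.ConnectedComponent,
    (∀ v ∈ c.supp, subNdeg H ↑v = 2) ∧ Odd c.supp.ncard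

/-- `prk G`: the maximum order of a subgraph of `G` each of whose connected components is a
single edge or a cycle (`0` for an edgeless graph). -/
noncomputable def prk {V : Type} (G : SimpleGraph V) : ℕ :=
  sSup {n | ∃ H : G.Subgraph, SubComponentsAreEdgesOrCycles H ∧ H.verts.ncard = n}

/-- `X` is a vertex cover of `H`: every edge of `H` has an endpoint in `X`. -/
def IsVertexCover {V : Type} (H : SimpleGraph V) (X : Set V) : Prop :=
  ∀ ⦃u v : V⦄, H.Adj u v → u ∈ X ∨ v ∈ X

/-! ## Symmetric differences of matchings -/

/-- The graph on `V` whose edges are the symmetric difference `M₁ △ M₂`. -/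
def symmDiffGraph {V : Type} [DecidableEq V] (M₁ M₂ : Finset (Sym2 V)) : SimpleGraph V :=
  SimpleGraph.fromEdgeSet ↑(symmDiff M₁ M₂)

/-- On the vertex set `S`, consecutive edges of `H` alternate between `M₁` and `M₂`. -/
def AltOn {V : Type} (H : SimpleGraph V) (M₁ M₂ : Finset (Sym2 V)) (S : Set V) : Prop :=
  ∀ ⦃u v w : V⦄, v ∈ S → H.Adj u v → H.Adj v w → u ≠ w →
    (s(u, v) ∈ M₁ ∧ s(v, w) ∈ M₂) ∨ (s(u, v) ∈ M₂ ∧ s(v, w) ∈ M₁)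

/-! ## Perfect flowers -/

/-- `(C, P)` is an `M`-perfect flower: `C` is an odd cycle of length `2k+1` containing
exactly `k` edges of `M`, and `P` is a nontrivial `M`-alternating path whose first and last
edges belong to `M`, such that `V(C) ∩ V(P)` consists exactly of the common endpoint `a`. -/
structure IsPerfectFlower {V : Type} [DecidableEq V] (G : SimpleGraph V)
    (M : Finset (Sym2 V)) {a b : V} (C : G.Walk a a) (P : G.Walk a b) : Prop where
  cycle : C.IsCycle
  odd : Odd C.length
  blossom : C.edges.countP (fun e => e ∈ M) = C.length / 2
  path : P.IsPath
  nontrivial : 0 < P.length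
  alternating : List.Chain' (fun e f => e ∈ M ↔ f ∉ M) P.edges
  firstEdge : ∀ e ∈ P.edges.head?, e ∈ M
  lastEdge : ∀ e ∈ P.edges.getLast?, e ∈ M
  meet : ∀ v : V, (v ∈ C.support ∧ v ∈ P.support) ↔ v = a

/-- The perfect-flower part `PF(G)`: vertices belonging to some `M`-perfect flower, for some
maximum matching `M` of `G`. -/
def PF {V : Type} [DecidableEq V] (G : SimpleGraph V) : Set V :=
  {x | ∃ M : Finset (Sym2 V), IsMatching G M ∧ M.card = matchNum G ∧
    ∃ (a b : V) (C : G.Walk a a) (P : G.Walk a b),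
      IsPerfectFlower G M C P ∧ (x ∈ C.support ∨ x ∈ P.support)}

/-- The perfect-flower-free part `PFF(G) = V(G) \ PF(G)`. -/
def PFF {V : Type} [DecidableEq V] (G : SimpleGraph V) : Set V := (PF G)ᶜ

/-! ## Determinant and permanent of a graph -/

/-- The determinant of the adjacency matrix of `G` over `ℤ`. -/
noncomputable def detG {V : Type} [Fintype V] [DecidableEq V] (G : SimpleGraph V) : ℤ :=
  letI := Classical.decRel G.Adj
  (SimpleGraph.adjMatrix ℤ G).det

/-- The permanent of the adjacency matrix of `G` over `ℤ`. -/
noncomputable def permG {V : Type} [Fintype V] [DecidableEq V] (G : SimpleGraph V) : ℤ :=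
  letI := Classical.decRel G.Adj
  (SimpleGraph.adjMatrix ℤ G).permanent

/-- `det(G[X])`, the determinant of the adjacency matrix of the induced subgraph `G[X]`
(equal to `1` when `X = ∅`, the determinant of the empty matrix). -/
noncomputable def detInd {V : Type} [Fintype V] [DecidableEq V]
    (G : SimpleGraph V) (X : Set V) : ℤ :=
  letI : Fintype ↥X := X.toFinite.fintype
  detG (G.induce X)

/-- `perm(G[X])`, the permanent of the adjacency matrix of the induced subgraph `G[X]`
(equal to `1` when `X = ∅`). -/
noncomputable def permInd {V : Type} [Fintype V] [DecidableEq V]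
    (G : SimpleGraph V) (X : Set V) : ℤ :=
  letI : Fintype ↥X := X.toFinite.fintype
  permG (G.induce X)

/-! ## Auxiliary constructions -/

/-- The subgraph of `G` spanned by the edges of a matching `M`: its vertices are the
endpoints of edges of `M` and its edges are exactly the edges of `M`. -/
def matchingSubgraph {V : Type} (G : SimpleGraph V) (M : Finset (Sym2 V))
    (hM : ∀ e ∈ M, e ∈ G.edgeSet) : G.Subgraph where
  verts := {v | ∃ e ∈ M, v ∈ e}
  Adj u v := s(u, v) ∈ M
  adj_sub h := G.mem_edgeSet.mp (hM _ h)
  edge_vert h := ⟨_, h, Sym2.mem_mk_left _ _⟩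
  symm := ⟨fun u v (h : s(u, v) ∈ M) => show s(v, u) ∈ M by rwa [Sym2.eq_swap]⟩

/-- The restriction of an edge set `M` to the edges with both endpoints in `X`. -/
noncomputable def restrictEdges {V : Type} (M : Finset (Sym2 V)) (X : Set V) :
    Finset (Sym2 V) :=
  letI := Classical.decPred fun e : Sym2 V => ∀ v ∈ e, v ∈ X
  M.filter fun e => ∀ v ∈ e, v ∈ X

/-- `M` is a perfect matching of the induced subgraph `G[X]`: a matching of `G` whose edges
have both endpoints in `X`, saturating every vertex of `X`. -/
def IsPerfectMatchingOn {V : Type} (G : SimpleGraph V) (X : Set V)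
    (M : Finset (Sym2 V)) : Prop :=
  (∀ e ∈ M, e ∈ G.edgeSet ∧ ∀ v ∈ e, v ∈ X) ∧
  (∀ e ∈ M, ∀ f ∈ M, e ≠ f → ∀ v : V, ¬(v ∈ e ∧ v ∈ f)) ∧
  ∀ v ∈ X, ∃ e ∈ M, v ∈ e

/-!
A maximum matching `M` spans a subgraph all of whose components are single edges, with
`2μ(G)` vertices, so `prk(G) ≥ 2μ(G)`. Conversely, in a König–Egerváry graph the complement
of a maximum independent set is a vertex cover `X` with `|X| = μ(G)`. In a subgraph `H` whose
components are edges or cycles, adjacent vertices have the same degree `i ∈ {1, 2}`; the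
vertices of degree `i` outside `X` send all their `i` edges to vertices of degree `i` inside
`X`, each of which receives at most `i`, so double counting gives `|V(H)| ≤ 2|X| = 2μ(G)`.
-/

open Finset

variable {V : Type} {G : SimpleGraph V}

lemma exists_isMatching_card_eq_matchNum [Fintype V] (G : SimpleGraph V) :
    ∃ M : Finset (Sym2 V), IsMatching G M ∧ M.card = matchNum G :=
  Nat.sSup_mem (s := {n | ∃ M : Finset (Sym2 V), IsMatching G M ∧ M.card = n})
    ⟨0, ∅, ⟨by simp, by simp⟩, rfl⟩
    ⟨Fintype.card (Sym2 V), by rintro _ ⟨M, -, rfl⟩; exact card_le_univ M⟩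

lemma exists_indep_card_eq_indepNum [Fintype V] (G : SimpleGraph V) :
    ∃ S : Finset V, (∀ u ∈ S, ∀ v ∈ S, ¬ G.Adj u v) ∧ S.card = indepNum G :=
  Nat.sSup_mem (s := {n | ∃ S : Finset V, (∀ u ∈ S, ∀ v ∈ S, ¬ G.Adj u v) ∧ S.card = n})
    ⟨0, ∅, by simp, rfl⟩
    ⟨Fintype.card V, by rintro _ ⟨S, -, rfl⟩; exact card_le_univ S⟩

lemma IsKonigEgervary.exists_isVertexCover [Fintype V] (hG : IsKonigEgervary G) :
    ∃ X : Finset V, IsVertexCover G X ∧ #X = matchNum G := by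
  classical
  obtain ⟨S, hS, hScard⟩ := exists_indep_card_eq_indepNum G
  refine ⟨Sᶜ, fun u v huv => ?_, ?_⟩
  · by_contra! h
    simp only [coe_compl, Set.mem_compl_iff, mem_coe, not_not] at h
    exact hS u h.1 v h.2 huv
  · rw [card_compl]
    unfold IsKonigEgervary at hG
    omega

section MatchingSubgraph

variable {M : Finset (Sym2 V)}

lemma ncard_matchingSubgraph_verts (hM : IsMatching G M) :
    (matchingSubgraph G M hM.1).verts.ncard = 2 * #M := by
  classical
  have hverts : (matchingSubgraph G M hM.1).verts = ↑(M.biUnion Sym2.toFinset) := by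
    ext v
    simp [matchingSubgraph]
  rw [hverts, Set.ncard_coe_finset, card_biUnion, sum_congr rfl, sum_const, smul_eq_mul,
    mul_comm]
  · exact fun e he => Sym2.card_toFinset_of_not_isDiag e (G.not_isDiag_of_mem_edgeSet (hM.1 e he))
  · intro e he f hf hef
    simp only [Function.onFun, disjoint_left, Sym2.mem_toFinset]
    exact fun v hve hvf => hM.2 e he f hf hef v ⟨hve, hvf⟩

lemma subNdeg_matchingSubgraph (hM : IsMatching G M) {v : V}
    (hv : v ∈ (matchingSubgraph G M hM.1).verts) :
    subNdeg (matchingSubgraph G M hM.1) v = 1 := by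
  obtain ⟨e, he, hve⟩ := hv
  obtain ⟨w, rfl⟩ := Sym2.mem_iff_exists.mp hve
  have hnbr : (matchingSubgraph G M hM.1).neighborSet v = {w} := by
    ext w'
    refine ⟨fun (hw' : s(v, w') ∈ M) => ?_, fun h => (Set.mem_singleton_iff.mp h).symm ▸ he⟩
    by_contra hne
    exact hM.2 _ he _ hw' (mt Sym2.congr_right.mp (Ne.symm hne)) v
      ⟨Sym2.mem_mk_left _ _, Sym2.mem_mk_left _ _⟩
  rw [subNdeg, hnbr, Set.ncard_singleton]

lemma subComponentsAreEdgesOrCycles_matchingSubgraph (hM : IsMatching G M) :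
    SubComponentsAreEdgesOrCycles (matchingSubgraph G M hM.1) := by
  set H := matchingSubgraph G M hM.1
  refine ⟨fun v hv => Or.inl (subNdeg_matchingSubgraph hM hv), fun u v huv => ?_⟩
  rw [subNdeg_matchingSubgraph hM (H.edge_vert huv),
    subNdeg_matchingSubgraph hM (H.edge_vert huv.symm)]

end MatchingSubgraph

section VertexCover

variable [Fintype V] {X : Finset V} (H : G.Subgraph)

lemma card_filter_notMem_subNdeg_le [DecidableEq V] (hX : IsVertexCover G X)
    (hconst : ∀ ⦃u v : V⦄, H.Adj u v → subNdeg H u = subNdeg H v) {i : ℕ} (hi : 0 < i) :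
    #{v | v ∉ X ∧ subNdeg H v = i} ≤ #{v ∈ X | subNdeg H v = i} := by
  classical
  refine le_of_mul_le_mul_right (card_mul_le_card_mul H.Adj ?_ ?_) hi
  · intro u hu
    obtain ⟨huX, hui⟩ := (mem_filter.mp hu).2
    have hnbr : (↑(bipartiteAbove H.Adj {v ∈ X | subNdeg H v = i} u) : Set V) =
        H.neighborSet u := by
      ext w
      simp only [bipartiteAbove, coe_filter, mem_filter, Set.mem_ofPred_eq,
        SimpleGraph.Subgraph.mem_neighborSet]
      refine ⟨fun h => h.2, fun h => ⟨⟨(hX (H.adj_sub h)).resolve_left huX, ?_⟩, h⟩⟩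
      rw [← hconst h, hui]
    rw [← Set.ncard_coe_finset, hnbr, ← hui]
    rfl
  · intro w hw
    calc #(bipartiteBelow H.Adj {v | v ∉ X ∧ subNdeg H v = i} w)
        ≤ (H.neighborSet w).ncard := by
          rw [← Set.ncard_coe_finset]
          exact Set.ncard_le_ncard fun v hv => (mem_filter.mp hv).2.symm
      _ = i := (mem_filter.mp hw).2

lemma ncard_verts_le_two_mul_card_of_isVertexCover (hH : SubComponentsAreEdgesOrCycles H)
    (hX : IsVertexCover G X) : H.verts.ncard ≤ 2 * #X := by
  classical
  have hclass : ∀ i, 0 < i → #{v | subNdeg H v = i} ≤ 2 * #{v ∈ X | subNdeg H v = i} := by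
    intro i hi
    have houtside := card_filter_notMem_subNdeg_le H hX hH.2 hi
    calc #{v | subNdeg H v = i}
        ≤ #({v ∈ X | subNdeg H v = i} ∪ ({v | v ∉ X ∧ subNdeg H v = i} : Finset V)) :=
          card_le_card fun v hv => by by_cases hvX : v ∈ X <;> simp_all
      _ ≤ 2 * #{v ∈ X | subNdeg H v = i} := by
          have := card_union_le {v ∈ X | subNdeg H v = i} {v | v ∉ X ∧ subNdeg H v = i}
          omega
  have hdisj : ∀ s : Finset V, Disjoint {v ∈ s | subNdeg H v = 1} {v ∈ s | subNdeg H v = 2} :=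
    fun s => disjoint_filter.mpr fun v _ h1 h2 => by omega
  calc H.verts.ncard ≤ #{v | subNdeg H v = 1 ∨ subNdeg H v = 2} := by
        rw [← Set.ncard_coe_finset]
        exact Set.ncard_le_ncard fun v hv => by simpa using hH.1 v hv
    _ = #{v | subNdeg H v = 1} + #{v | subNdeg H v = 2} := by
        rw [filter_or, card_union_of_disjoint (hdisj _)]
    _ ≤ 2 * #{v ∈ X | subNdeg H v = 1} + 2 * #{v ∈ X | subNdeg H v = 2} :=
        add_le_add (hclass 1 one_pos) (hclass 2 two_pos)
    _ = 2 * #{v ∈ X | subNdeg H v = 1 ∨ subNdeg H v = 2} := by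
        rw [filter_or, card_union_of_disjoint (hdisj _), mul_add]
    _ ≤ 2 * #X := Nat.mul_le_mul_left 2 (card_filter_le _ _)

end VertexCover

/-- For every König–Egerváry graph `G`: `prk(G) = 2μ(G)`. -/
theorem stmt5 {V : Type} [Fintype V] (G : SimpleGraph V) (hG : IsKonigEgervary G) :
    prk G = 2 * matchNum G := by
  obtain ⟨M, hM, hMcard⟩ := exists_isMatching_card_eq_matchNum G
  obtain ⟨X, hX, hXcard⟩ := hG.exists_isVertexCover
  have hbound : ∀ n ∈ {n | ∃ H : G.Subgraph, SubComponentsAreEdgesOrCycles H ∧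
      H.verts.ncard = n}, n ≤ 2 * matchNum G := by
    rintro _ ⟨H, hH, rfl⟩
    exact hXcard ▸ ncard_verts_le_two_mul_card_of_isVertexCover H hH hX
  have hmatching : 2 * matchNum G ∈ {n | ∃ H : G.Subgraph, SubComponentsAreEdgesOrCycles H ∧
      H.verts.ncard = n} :=
    ⟨_, subComponentsAreEdgesOrCycles_matchingSubgraph hM,
      by rw [ncard_matchingSubgraph_verts hM, hMcard]⟩
  exact le_antisymm (csSup_le ⟨_, hmatching⟩ hbound) (le_csSup ⟨_, hbound⟩ hmatching)
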